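/- Uniqueness of the generating family: if β_t is a CPM with induced family (ρ^z_t)_{z∈(z_d,z_u)} and (σ^z_t)_{z∈(z_d,z_u)} is any standard family of conditional convex risk measures generating β_t, then σ^z_t(X) = ρ^z_t(X) for all z ∈ (z_d, z_u) and all X ∈ L^{bb}_T. -/

import Mathlib

open MeasureTheory Filter Set Topology

noncomputable section

variable {Ω : Type*}

/-- The lattice of `m`-measurable random variables bounded from below
(possibly `+∞`-valued). -/
def Lbb (m : MeasurableSpace Ω) : Set (Ω → EReal) :=
  {X | Measurable[m] X ∧ ∃ c : ℝ, ∀ ω, (c : EReal) ≤ X ω}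

/-- `ρ` is the `P`-essential infimum of the family `S` of (`m`-measurable)
random variables. -/
def IsEssInfFam {F : MeasurableSpace Ω} (m : MeasurableSpace Ω) (P : @Measure Ω F)
    (S : Set (Ω → EReal)) (ρ : Ω → EReal) : Prop :=
  Measurable[m] ρ ∧ (∀ ξ ∈ S, ∀ᵐ ω ∂P, ρ ω ≤ ξ ω) ∧
    ∀ η : Ω → EReal, Measurable[m] η → (∀ ξ ∈ S, ∀ᵐ ω ∂P, η ω ≤ ξ ω) →
      ∀ᵐ ω ∂P, η ω ≤ ρ ω

/-- `g` is, on the set `C`, the `P`-essential supremum of the family `S`. -/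
def IsEssSupFamOn {F : MeasurableSpace Ω} (m : MeasurableSpace Ω) (P : @Measure Ω F)
    (S : Set (Ω → EReal)) (g : Ω → EReal) (C : Set Ω) : Prop :=
  (∀ φ ∈ S, ∀ᵐ ω ∂P, ω ∈ C → φ ω ≤ g ω) ∧
    ∀ η : Ω → EReal, Measurable[m] η → (∀ φ ∈ S, ∀ᵐ ω ∂P, ω ∈ C → φ ω ≤ η ω) →
      ∀ᵐ ω ∂P, ω ∈ C → g ω ≤ η ω

/-- A conditional performance measure (CPM) `β` conditional to the sub-σ-algebra `m`,
defined on `F`-measurable variables bounded from below, with non-random essential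
bounds `zd < zu`. -/
structure IsCPM (F m : MeasurableSpace Ω) (P : @Measure Ω F)
    (β : (Ω → EReal) → Ω → EReal) (zd zu : EReal) : Prop where
  maps : ∀ X ∈ Lbb F, β X ∈ Lbb m
  quasiConcave : ∀ X ∈ Lbb F, ∀ Y ∈ Lbb F, ∀ c : ℝ, 0 ≤ c → c ≤ 1 →
    ∀ᵐ ω ∂P, min (β X ω) (β Y ω) ≤
      β (fun ω' => (c : EReal) * X ω' + ((1 - c : ℝ) : EReal) * Y ω') ω
  lt_bounds : zd < zu
  le_zu : ∀ X ∈ Lbb F, ∀ᵐ ω ∂P, β X ω ≤ zu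
  zu_least : ∀ η : Ω → EReal, Measurable[m] η →
    (∀ X ∈ Lbb F, ∀ᵐ ω ∂P, β X ω ≤ η ω) → ∀ᵐ ω ∂P, zu ≤ η ω
  zd_le : ∀ X ∈ Lbb F, ∀ᵐ ω ∂P, zd ≤ β X ω
  zd_greatest : ∀ η : Ω → EReal, Measurable[m] η →
    (∀ X ∈ Lbb F, ∀ᵐ ω ∂P, η ω ≤ β X ω) → ∀ᵐ ω ∂P, η ω ≤ zd
  mono : ∀ X Y : Ω → EReal, (∀ ω, Y ω ≤ X ω) → ∀ᵐ ω ∂P, β Y ω ≤ β X ω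
  strictShift : ∀ X ∈ Lbb F, ∀ c : ℝ, 0 < c →
    ∀ᵐ ω ∂P, β X ω < zu → zd < β (fun ω' => X ω' + (c : EReal)) ω →
      β X ω < β (fun ω' => X ω' + (c : EReal)) ω
  contBelow : ∀ (Xs : ℕ → Ω → EReal) (X : Ω → EReal), (∀ n, Xs n ∈ Lbb F) → X ∈ Lbb F →
    (∀ ω, Monotone fun n => Xs n ω) → (∀ ω, X ω = ⨆ n, Xs n ω) →
    ∀ᵐ ω ∂P, β X ω = ⨆ n, β (Xs n) ω
  loc : ∀ X ∈ Lbb F, ∀ B : Set Ω, MeasurableSet[m] B →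
    ∀ᵐ ω ∂P, ω ∈ B → β X ω = β (B.indicator X) ω
  levelBdd : ∀ z : ℝ, zd < (z : EReal) → (z : EReal) < zu →
    ∃ x : ℝ, ∀ ξ ∈ Lbb m, (∀ᵐ ω ∂P, (z : EReal) ≤ β ξ ω) → ∀ᵐ ω ∂P, (x : EReal) ≤ ξ ω

/-- Scale invariance of a conditional performance measure. -/
def ScaleInvariant (F : MeasurableSpace Ω) (P : @Measure Ω F)
    (β : (Ω → EReal) → Ω → EReal) : Prop :=
  ∀ X ∈ Lbb F, ∀ c : ℝ, 0 < c → ∀ᵐ ω ∂P, β (fun ω' => (c : EReal) * X ω') ω = β X ω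

/-- The set `M^z_t(X) = {ξ ∈ L^{bb}_t : β_t(X + ξ) ≥ z}`. -/
def Mset (F m : MeasurableSpace Ω) (P : @Measure Ω F)
    (β : (Ω → EReal) → Ω → EReal) (z : ℝ) (X : Ω → EReal) : Set (Ω → EReal) :=
  {ξ | ξ ∈ Lbb m ∧ ∀ᵐ ω ∂P, (z : EReal) ≤ β (fun ω' => X ω' + ξ ω') ω}

/-- The family of simple `m`-measurable variables `φ = Σ z_i 1_{B_i}` with
`zd < φ < zu` and `ρ^{z_i} < 0` on `B_i ∩ C`. -/
def SimpleFam {F : MeasurableSpace Ω} (m : MeasurableSpace Ω) (P : @Measure Ω F)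
    (ρ : ℝ → Ω → EReal) (zd zu : EReal) (C : Set Ω) : Set (Ω → EReal) :=
  {φ | ∃ (n : ℕ) (zs : Fin n → ℝ) (Bs : Fin n → Set Ω),
    (∀ i, MeasurableSet[m] (Bs i)) ∧ Pairwise (Function.onFun Disjoint Bs) ∧
    (⋃ i, Bs i) = Set.univ ∧
    (∀ i, zd < (zs i : EReal) ∧ (zs i : EReal) < zu) ∧
    (∀ i, ∀ ω ∈ Bs i, φ ω = (zs i : EReal)) ∧
    (∀ i, ∀ᵐ ω ∂P, ω ∈ Bs i ∩ C → ρ (zs i) ω < 0)}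

/-- A standard family of conditional convex risk measures `(σ^z)_{z ∈ (zd, zu)}`. -/
structure IsStdFamily (F m : MeasurableSpace Ω) (P : @Measure Ω F)
    (σ : ℝ → (Ω → EReal) → Ω → EReal) (zd zu : EReal) : Prop where
  lt_bounds : zd < zu
  maps : ∀ z : ℝ, zd < (z : EReal) → (z : EReal) < zu → ∀ X ∈ Lbb F,
    Measurable[m] (σ z X) ∧ ∃ C : ℝ, ∀ ω, σ z X ω ≤ (C : EReal)
  boundedOnBounded : ∀ z : ℝ, zd < (z : EReal) → (z : EReal) < zu → ∀ X ∈ Lbb F,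
    (∃ C : ℝ, ∀ ω, X ω ≤ (C : EReal)) → ∃ c : ℝ, ∀ ω, (c : EReal) ≤ σ z X ω
  convex : ∀ z : ℝ, zd < (z : EReal) → (z : EReal) < zu →
    ∀ X ∈ Lbb F, ∀ Y ∈ Lbb F, ∀ c : ℝ, 0 ≤ c → c ≤ 1 →
    ∀ᵐ ω ∂P, σ z (fun ω' => (c : EReal) * X ω' + ((1 - c : ℝ) : EReal) * Y ω') ω ≤
      (c : EReal) * σ z X ω + ((1 - c : ℝ) : EReal) * σ z Y ω
  anti : ∀ z : ℝ, zd < (z : EReal) → (z : EReal) < zu → ∀ X Y : Ω → EReal,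
    (∀ ω, Y ω ≤ X ω) → ∀ᵐ ω ∂P, σ z X ω ≤ σ z Y ω
  transInv : ∀ z : ℝ, zd < (z : EReal) → (z : EReal) < zu → ∀ X ∈ Lbb F, ∀ ξ ∈ Lbb m,
    ∀ᵐ ω ∂P, σ z (fun ω' => X ω' + ξ ω') ω = σ z X ω - ξ ω
  loc : ∀ z : ℝ, zd < (z : EReal) → (z : EReal) < zu → ∀ X ∈ Lbb F,
    ∀ B : Set Ω, MeasurableSet[m] B →
    ∀ᵐ ω ∂P, ω ∈ B → σ z X ω = σ z (B.indicator X) ω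
  contBelow : ∀ z : ℝ, zd < (z : EReal) → (z : EReal) < zu →
    ∀ (Xs : ℕ → Ω → EReal) (X : Ω → EReal), (∀ n, Xs n ∈ Lbb F) → X ∈ Lbb F →
    (∀ ω, Monotone fun n => Xs n ω) → (∀ ω, X ω = ⨆ n, Xs n ω) →
    ∀ᵐ ω ∂P, σ z X ω = ⨅ n, σ z (Xs n) ω
  paths : ∀ X ∈ Lbb F, ∀ᵐ ω ∂P,
    MonotoneOn (fun z : ℝ => σ z X ω) {z : ℝ | zd < (z : EReal) ∧ (z : EReal) < zu} ∧
    ContinuousOn (fun z : ℝ => σ z X ω) {z : ℝ | zd < (z : EReal) ∧ (z : EReal) < zu}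
  botLim : zd = ⊥ →
    Tendsto (fun z : ℝ => essSup (σ z (fun _ => 0)) P) atBot (𝓝 (⊥ : EReal))

/-- The set `B_X = ∩_{z ∈ (zd,zu)} {σ^z(X) ≥ 0}`. -/
def BXset (σ : ℝ → (Ω → EReal) → Ω → EReal) (zd zu : EReal) (X : Ω → EReal) : Set Ω :=
  {ω | ∀ z : ℝ, zd < (z : EReal) → (z : EReal) < zu → 0 ≤ σ z X ω}

/-- `g` is the value at `X` of the performance measure generated by the standard
family `σ`:  `g = zd 1_{B_X} + 1_{B_X^c} esssup{φ simple : σ^{z_i}(X) < 0 on B_i ∩ B_X^c}`. -/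
def GeneratedBy (F m : MeasurableSpace Ω) (P : @Measure Ω F)
    (σ : ℝ → (Ω → EReal) → Ω → EReal) (zd zu : EReal)
    (X : Ω → EReal) (g : Ω → EReal) : Prop :=
  (∀ᵐ ω ∂P, ω ∈ BXset σ zd zu X → g ω = zd) ∧
  IsEssSupFamOn m P (SimpleFam m P (fun z => σ z X) zd zu ((BXset σ zd zu X)ᶜ)) g
    ((BXset σ zd zu X)ᶜ)

/-! On `B_Y` the generated value `β(Y)` is `zd`; off `B_Y` it is the essential supremum of the
simple levels `Σ zᵢ 1_{Bᵢ}` with `σ^{zᵢ}(Y) < 0` on `Bᵢ`. Since `z ↦ σ^z(Y)` is nondecreasing,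
these levels stay below `w` wherever `σ^w(Y) > 0`, so `β(Y) ≥ z` forces `σ^w(Y) ≤ 0` for all
`w < z`, hence `σ^z(Y) ≤ 0` by continuity; conversely the constant level `z` shows that
`σ^z(Y) < 0` forces `β(Y) ≥ z`. By translation invariance `σ^z(X + ξ) = σ^z(X) - ξ`, so every
`ξ ∈ M^z(X)` lies above `σ^z(X)` and every `ξ` strictly above `σ^z(X)` lies in `M^z(X)`: the
essential infimum `ρ^z(X)` of `M^z(X)` is `σ^z(X)`. -/

lemma add_mem_Lbb {F m : MeasurableSpace Ω} (hm : m ≤ F) {X ξ : Ω → EReal}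
    (hX : X ∈ Lbb F) (hξ : ξ ∈ Lbb m) : (fun ω => X ω + ξ ω) ∈ Lbb F := by
  obtain ⟨hXm, cX, hcX⟩ := hX
  obtain ⟨hξm, cξ, hcξ⟩ := hξ
  refine ⟨hXm.add (hξm.mono hm le_rfl), cX + cξ, fun ω => ?_⟩
  rw [EReal.coe_add]
  exact add_le_add (hcX ω) (hcξ ω)

lemma nonpos_of_forall_rat_nonpos {f : ℝ → EReal} {a z : ℝ} (haz : a < z)
    (hf : ContinuousAt f z) (h : ∀ q : ℚ, a < q → (q : ℝ) < z → f q ≤ 0) : f z ≤ 0 := by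
  by_contra! hpos
  obtain ⟨l, hlz, hl⟩ := exists_Ioc_subset_of_mem_nhds (hf.preimage_mem_nhds (Ioi_mem_nhds hpos))
    ⟨a, haz⟩
  obtain ⟨q, hq, hqz⟩ := exists_rat_btwn (max_lt haz hlz)
  exact (h q ((le_max_left _ _).trans_lt hq) hqz).not_gt
    (hl ⟨(le_max_right _ _).trans_lt hq, hqz.le⟩)

lemma isOpen_setOf_coe_mem_Ioo (zd zu : EReal) :
    IsOpen {z : ℝ | zd < (z : EReal) ∧ (z : EReal) < zu} :=
  isOpen_Ioo.preimage continuous_coe_real_ereal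

section Generated

variable {F m : MeasurableSpace Ω} {P : @Measure Ω F} {σ : ℝ → (Ω → EReal) → Ω → EReal}
  {zd zu : EReal} {Y g : Ω → EReal}

lemma SimpleFam.ae_le_of_pos {C : Set Ω} {φ : Ω → EReal}
    (hφ : φ ∈ SimpleFam m P (fun z => σ z Y) zd zu C) {w : ℝ} (hwd : zd < w)
    (hwu : (w : EReal) < zu)
    (hmono : ∀ᵐ ω ∂P,
      MonotoneOn (fun z : ℝ => σ z Y ω) {z : ℝ | zd < (z : EReal) ∧ (z : EReal) < zu}) :
    ∀ᵐ ω ∂P, ω ∈ C → 0 < σ w Y ω → φ ω ≤ w := by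
  obtain ⟨n, zs, Bs, -, -, hcover, hbounds, hvalue, hneg⟩ := hφ
  filter_upwards [ae_all_iff.2 hneg, hmono] with ω hneg hmono hωC hpos
  obtain ⟨i, hi⟩ := mem_iUnion.1 (hcover ▸ mem_univ ω : ω ∈ ⋃ i, Bs i)
  rw [hvalue i ω hi, EReal.coe_le_coe_iff]
  by_contra! hlt
  exact (hpos.trans_le (hmono ⟨hwd, hwu⟩ (hbounds i) hlt.le)).not_gt (hneg i ⟨hi, hωC⟩)

lemma GeneratedBy.ae_le_of_ae_neg (hgen : GeneratedBy F m P σ zd zu Y g) {z : ℝ}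
    (hzd : zd < z) (hzu : (z : EReal) < zu) (hneg : ∀ᵐ ω ∂P, σ z Y ω < 0) :
    ∀ᵐ ω ∂P, (z : EReal) ≤ g ω := by
  have hconst : (fun _ => (z : EReal)) ∈
      SimpleFam m P (fun z => σ z Y) zd zu (BXset σ zd zu Y)ᶜ :=
    ⟨1, fun _ => z, fun _ => univ, fun _ => MeasurableSet.univ,
      fun i j hij => (hij (Subsingleton.elim i j)).elim,
      iUnion_const univ, fun _ => ⟨hzd, hzu⟩, fun _ _ _ => rfl,
      fun _ => hneg.mono fun ω h _ => h⟩
  filter_upwards [hgen.2.1 _ hconst, hneg] with ω hle hneg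
  exact hle fun hB => (hB z hzd hzu).not_gt hneg

lemma GeneratedBy.ae_nonpos_of_lt_of_ae_le (hgen : GeneratedBy F m P σ zd zu Y g)
    (hσ : IsStdFamily F m P σ zd zu) (hY : Y ∈ Lbb F) {z w : ℝ} (hwd : zd < w) (hwz : w < z)
    (hzu : (z : EReal) < zu) (hle : ∀ᵐ ω ∂P, (z : EReal) ≤ g ω) :
    ∀ᵐ ω ∂P, σ w Y ω ≤ 0 := by
  have hwz' : (w : EReal) < z := EReal.coe_lt_coe_iff.2 hwz
  have hwu : (w : EReal) < zu := hwz'.trans hzu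
  set η : Ω → EReal := fun ω => if 0 < σ w Y ω then (w : EReal) else ⊤ with hη
  have hηm : Measurable[m] η := Measurable.ite
    (measurableSet_lt measurable_const (hσ.maps w hwd hwu Y hY).1) measurable_const measurable_const
  have hbound : ∀ φ ∈ SimpleFam m P (fun z => σ z Y) zd zu (BXset σ zd zu Y)ᶜ,
      ∀ᵐ ω ∂P, ω ∈ (BXset σ zd zu Y)ᶜ → φ ω ≤ η ω := by
    intro φ hφ
    filter_upwards [SimpleFam.ae_le_of_pos hφ hwd hwu ((hσ.paths Y hY).mono fun _ h => h.1)]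
      with ω hφle hωC
    simp only [hη]
    split_ifs with hpos
    · exact hφle hωC hpos
    · exact le_top
  filter_upwards [hgen.2.2 η hηm hbound, hgen.1, hle] with ω hgη hgB hle
  by_contra! hpos
  have hωC : ω ∉ BXset σ zd zu Y := fun hB => (hle.trans_eq (hgB hB)).not_gt (hwd.trans hwz')
  have hgw : g ω ≤ w := by simpa [hη, hpos] using hgη hωC
  exact (hle.trans hgw).not_gt hwz'

lemma GeneratedBy.ae_nonpos_of_ae_le (hgen : GeneratedBy F m P σ zd zu Y g)
    (hσ : IsStdFamily F m P σ zd zu) (hY : Y ∈ Lbb F) {z : ℝ} (hzd : zd < z)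
    (hzu : (z : EReal) < zu) (hle : ∀ᵐ ω ∂P, (z : EReal) ≤ g ω) : ∀ᵐ ω ∂P, σ z Y ω ≤ 0 := by
  obtain ⟨a, hda, haz⟩ := EReal.exists_between_coe_real hzd
  have hrat : ∀ᵐ ω ∂P, ∀ q : ℚ, a < q → (q : ℝ) < z → σ q Y ω ≤ 0 := by
    refine ae_all_iff.2 fun q => ?_
    by_cases haq : a < q
    · by_cases hqz : (q : ℝ) < z
      · filter_upwards [hgen.ae_nonpos_of_lt_of_ae_le hσ hY
          (hda.trans (EReal.coe_lt_coe_iff.2 haq)) hqz hzu hle] with ω h _ _ using h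
      · exact Eventually.of_forall fun _ _ h => (hqz h).elim
    · exact Eventually.of_forall fun _ h => (haq h).elim
  filter_upwards [hrat, hσ.paths Y hY] with ω hrat hpath
  exact nonpos_of_forall_rat_nonpos (EReal.coe_lt_coe_iff.1 haz)
    (hpath.2.continuousAt ((isOpen_setOf_coe_mem_Ioo zd zu).mem_nhds ⟨hzd, hzu⟩)) hrat

end Generated

section Induced

variable {F m : MeasurableSpace Ω} {P : @Measure Ω F} {β : (Ω → EReal) → Ω → EReal}
  {σ : ℝ → (Ω → EReal) → Ω → EReal} {zd zu : EReal} {z : ℝ} {X ξ : Ω → EReal}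

lemma ae_le_of_mem_Mset (hm : m ≤ F) (hσ : IsStdFamily F m P σ zd zu)
    (hgen : ∀ X ∈ Lbb F, GeneratedBy F m P σ zd zu X (β X))
    (hzd : zd < z) (hzu : (z : EReal) < zu) (hX : X ∈ Lbb F) (hξ : ξ ∈ Mset F m P β z X) :
    ∀ᵐ ω ∂P, σ z X ω ≤ ξ ω := by
  have hXξ := add_mem_Lbb hm hX hξ.1
  filter_upwards [(hgen _ hXξ).ae_nonpos_of_ae_le hσ hXξ hzd hzu hξ.2,
    hσ.transInv z hzd hzu X hX ξ hξ.1] with ω hnonpos htrans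
  rwa [htrans, EReal.sub_nonpos] at hnonpos

lemma mem_Mset_of_ae_lt (hm : m ≤ F) (hσ : IsStdFamily F m P σ zd zu)
    (hgen : ∀ X ∈ Lbb F, GeneratedBy F m P σ zd zu X (β X))
    (hzd : zd < z) (hzu : (z : EReal) < zu) (hX : X ∈ Lbb F) (hξ : ξ ∈ Lbb m)
    (hlt : ∀ᵐ ω ∂P, σ z X ω < ξ ω) : ξ ∈ Mset F m P β z X := by
  have hXξ := add_mem_Lbb hm hX hξ
  refine ⟨hξ, (hgen _ hXξ).ae_le_of_ae_neg hzd hzu ?_⟩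
  filter_upwards [hlt, hσ.transInv z hzd hzu X hX ξ hξ] with ω hlt htrans
  rw [htrans]
  exact (EReal.sub_neg (.inl hlt.ne_top) (.inr hlt.ne_bot)).2 hlt

lemma ite_lt_mem_Mset (hm : m ≤ F) (hσ : IsStdFamily F m P σ zd zu)
    (hgen : ∀ X ∈ Lbb F, GeneratedBy F m P σ zd zu X (β X))
    (hzd : zd < z) (hzu : (z : EReal) < zu) (hX : X ∈ Lbb F) (q : ℝ) :
    (fun ω => if σ z X ω < q then (q : EReal) else ⊤) ∈ Mset F m P β z X := by
  obtain ⟨hmeas, C, hC⟩ := hσ.maps z hzd hzu X hX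
  refine mem_Mset_of_ae_lt hm hσ hgen hzd hzu hX
    ⟨Measurable.ite (measurableSet_lt hmeas measurable_const) measurable_const measurable_const,
      q, fun ω => ?_⟩ (Eventually.of_forall fun ω => ?_)
  · dsimp only
    split_ifs <;> simp
  · split_ifs with h
    · exact h
    · exact (hC ω).trans_lt (EReal.coe_lt_top C)

end Induced

theorem stmt_16_general {Ω : Type*} (F m : MeasurableSpace Ω) (hm : m ≤ F) (P : @Measure Ω F)
    (β : (Ω → EReal) → Ω → EReal) (zd zu : EReal)
    (ρ : ℝ → (Ω → EReal) → Ω → EReal)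
    (hρ : ∀ z : ℝ, zd < (z : EReal) → (z : EReal) < zu → ∀ X ∈ Lbb F,
      IsEssInfFam m P (Mset F m P β z X) (ρ z X))
    (σ : ℝ → (Ω → EReal) → Ω → EReal)
    (hσ : IsStdFamily F m P σ zd zu)
    (hgen : ∀ X ∈ Lbb F, GeneratedBy F m P σ zd zu X (β X)) :
    ∀ z : ℝ, zd < (z : EReal) → (z : EReal) < zu → ∀ X ∈ Lbb F,
      ∀ᵐ ω ∂P, σ z X ω = ρ z X ω := by
  intro z hzd hzu X hX
  obtain ⟨-, hρ_le, hρ_greatest⟩ := hρ z hzd hzu X hX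
  have hσ_le : ∀ᵐ ω ∂P, σ z X ω ≤ ρ z X ω :=
    hρ_greatest _ (hσ.maps z hzd hzu X hX).1 fun ξ hξ =>
      ae_le_of_mem_Mset hm hσ hgen hzd hzu hX hξ
  have hρ_le_rat : ∀ᵐ ω ∂P, ∀ q : ℚ, σ z X ω < (q : ℝ) → ρ z X ω ≤ (q : ℝ) :=
    ae_all_iff.2 fun q => (hρ_le _ (ite_lt_mem_Mset hm hσ hgen hzd hzu hX q)).mono
      fun ω h hlt => by simpa [hlt] using h
  filter_upwards [hσ_le, hρ_le_rat] with ω hσ_le hρ_le_rat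
  refine le_antisymm hσ_le (le_of_forall_gt_imp_ge_of_dense fun c hc => ?_)
  obtain ⟨q, hσq, hqc⟩ := EReal.lt_iff_exists_rat_btwn.1 hc
  exact (hρ_le_rat q hσq).trans hqc.le

/-- uniqueness of the generating family: any standard family `(σ^z_t)`
generating the CPM `β_t` coincides with the induced family `(ρ^z_t)`. -/
theorem stmt_16 {Ω : Type*} (F m : MeasurableSpace Ω) (hm : m ≤ F) (P : @Measure Ω F)
    (β : (Ω → EReal) → Ω → EReal) (zd zu : EReal)
    (hCPM : IsCPM F m P β zd zu)
    (ρ : ℝ → (Ω → EReal) → Ω → EReal)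
    (hρ : ∀ z : ℝ, zd < (z : EReal) → (z : EReal) < zu → ∀ X ∈ Lbb F,
      IsEssInfFam m P (Mset F m P β z X) (ρ z X))
    (σ : ℝ → (Ω → EReal) → Ω → EReal)
    (hσ : IsStdFamily F m P σ zd zu)
    (hgen : ∀ X ∈ Lbb F, GeneratedBy F m P σ zd zu X (β X)) :
    ∀ z : ℝ, zd < (z : EReal) → (z : EReal) < zu → ∀ X ∈ Lbb F,
      ∀ᵐ ω ∂P, σ z X ω = ρ z X ω :=
  stmt_16_general F m hm P β zd zu ρ hρ σ hσ hgen
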